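/- The smooth 0-divergence dominates a Chernoff-type tail bound: for probability mass functions P ≪ Q on a finite set Ω, any a ∈ ℝ, and δ ≥ P({x : (log₂(P(x)/Q(x))) < a}), we have D₀^δ(P‖Q) ≥ a + log₂ P(A) where A = {x : log₂(P(x)/Q(x)) ≥ a}; in particular if P(A) ≥ 1 - δ then D₀^δ(P‖Q) ≥ a + log₂(1-δ). -/

import Mathlib

open scoped BigOperators Classical

/-- `-log₂ s` with the convention `-log₂ 0 = +∞`, valued in the extended reals. -/
noncomputable def negLog2 (s : ℝ) : EReal :=
  if s = 0 then ⊤ else ((-Real.logb 2 s : ℝ) : EReal)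

/-- `P` is a probability mass function on the finite set `Ω`. -/
def IsPmf {Ω : Type*} [Fintype Ω] (P : Ω → ℝ) : Prop :=
  (∀ x, 0 ≤ P x) ∧ ∑ x, P x = 1

/-- The smooth `0`-divergence
`D₀^δ(P‖Q) = sup { -log₂ (∑_x Φ x * Q x) : Φ : Ω → [0,1], ∑_x Φ x * P x ≥ 1 - δ }`. -/
noncomputable def D0smooth {Ω : Type*} [Fintype Ω] (P Q : Ω → ℝ) (δ : ℝ) : EReal :=
  sSup { r : EReal | ∃ Φ : Ω → ℝ, (∀ x, 0 ≤ Φ x ∧ Φ x ≤ 1) ∧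
    1 - δ ≤ ∑ x, Φ x * P x ∧ r = negLog2 (∑ x, Φ x * Q x) }

/-- Rényi's divergence of order `0`: `D₀(P‖Q) = -log₂ (∑_{x : P x > 0} Q x)`. -/
noncomputable def D0 {Ω : Type*} [Fintype Ω] (P Q : Ω → ℝ) : EReal :=
  negLog2 (∑ x ∈ Finset.univ.filter (fun x => 0 < P x), Q x)

/-- `log₂ s` with convention `log₂ 0 = -∞`, valued in the extended reals. -/
noncomputable def log2E (s : ℝ) : EReal :=
  if s = 0 then ⊥ else ((Real.logb 2 s : ℝ) : EReal)

open Finset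

/-!
Take as test function the indicator of the set where `P x > 0` and `log₂ (P x / Q x) ≥ a`. It
passes the test with probability `P(A) ≥ 1 - δ`, and on it `Q x ≤ 2^{-a} P x`, so its
`Q`-probability is at most `2^{-a}`; hence `D₀^δ(P‖Q) ≥ a`, and both bounds follow because the
logarithms of the probabilities `P(A)` and `1 - δ` are nonpositive (for `δ ≥ 1` the divergence
is `⊤`, attained by the zero test).
-/

lemma negLog2_zero : negLog2 0 = ⊤ := if_pos rfl

lemma le_negLog2_of_le_rpow_neg {a s : ℝ} (hs : 0 ≤ s) (h : s ≤ 2 ^ (-a)) :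
    (a : EReal) ≤ negLog2 s := by
  rcases hs.eq_or_lt with rfl | hs
  · simp [negLog2_zero]
  have hlog : Real.logb 2 s ≤ -a :=
    calc Real.logb 2 s ≤ Real.logb 2 (2 ^ (-a)) := Real.logb_le_logb_of_le one_lt_two hs h
      _ = -a := Real.logb_rpow two_pos one_lt_two.ne'
  rw [negLog2, if_neg hs.ne']
  exact EReal.coe_le_coe_iff.mpr (by linarith)

lemma log2E_nonpos {s : ℝ} (h₀ : 0 ≤ s) (h₁ : s ≤ 1) : log2E s ≤ 0 := by
  unfold log2E
  split_ifs
  · exact bot_le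
  · exact EReal.coe_nonpos.mpr (Real.logb_nonpos one_lt_two h₀ h₁)

lemma le_rpow_neg_mul_of_le_logb_div {a p q : ℝ} (hp : 0 < p) (hq : 0 < q)
    (h : a ≤ Real.logb 2 (p / q)) : q ≤ 2 ^ (-a) * p := by
  have h2a : 2 ^ a * q ≤ p :=
    (le_div_iff₀ hq).mp ((Real.le_logb_iff_rpow_le one_lt_two (div_pos hp hq)).mp h)
  rw [Real.rpow_neg zero_le_two, ← div_eq_inv_mul, le_div_iff₀ (by positivity), mul_comm]
  exact h2a

section D0smooth

variable {Ω : Type*} [Fintype Ω] {P Q : Ω → ℝ} {δ : ℝ}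

lemma negLog2_le_D0smooth (Φ : Ω → ℝ) (hΦ : ∀ x, 0 ≤ Φ x ∧ Φ x ≤ 1)
    (h : 1 - δ ≤ ∑ x, Φ x * P x) : negLog2 (∑ x, Φ x * Q x) ≤ D0smooth P Q δ :=
  le_sSup ⟨Φ, hΦ, h, rfl⟩

lemma negLog2_sum_le_D0smooth (S : Finset Ω) (h : 1 - δ ≤ ∑ x ∈ S, P x) :
    negLog2 (∑ x ∈ S, Q x) ≤ D0smooth P Q δ := by
  have hind (f : Ω → ℝ) : ∑ x, (if x ∈ S then 1 else 0) * f x = ∑ x ∈ S, f x := by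
    simp only [ite_mul, one_mul, zero_mul, Fintype.sum_ite_mem]
  rw [← hind]
  refine negLog2_le_D0smooth _ (fun x => ?_) (by rwa [hind])
  split_ifs <;> norm_num

lemma D0smooth_eq_top_of_one_le (hδ : 1 ≤ δ) : D0smooth P Q δ = ⊤ := by
  refine top_le_iff.mp ?_
  simpa [negLog2_zero] using negLog2_sum_le_D0smooth (P := P) (Q := Q) ∅ (by simpa)

lemma one_sub_le_sum_filter_of_sum_filter_lt_le (hP : ∑ x, P x = 1) (f : Ω → ℝ) (a : ℝ)
    (hδ : ∑ x ∈ univ.filter (fun x => f x < a), P x ≤ δ) :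
    1 - δ ≤ ∑ x ∈ univ.filter (fun x => a ≤ f x), P x := by
  have hsplit := sum_filter_add_sum_filter_not univ (fun x => a ≤ f x) P
  simp only [not_le] at hsplit
  linarith

lemma le_D0smooth (hP : IsPmf P) (hQ : ∀ x, 0 ≤ Q x) (habs : ∀ x, P x ≠ 0 → Q x ≠ 0) (a : ℝ)
    (hA : 1 - δ ≤ ∑ x ∈ univ.filter (fun x => a ≤ Real.logb 2 (P x / Q x)), P x) :
    (a : EReal) ≤ D0smooth P Q δ := by
  set S := (univ.filter fun x => a ≤ Real.logb 2 (P x / Q x)).filter (fun x => 0 < P x)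
  have hPS : ∑ x ∈ S, P x = ∑ x ∈ univ.filter (fun x => a ≤ Real.logb 2 (P x / Q x)), P x :=
    sum_filter_of_ne fun x _ hx => (hP.1 x).lt_of_ne' hx
  have hQS : ∑ x ∈ S, Q x ≤ 2 ^ (-a) :=
    calc ∑ x ∈ S, Q x ≤ ∑ x ∈ S, 2 ^ (-a) * P x := sum_le_sum fun x hx => by
          simp only [S, mem_filter, mem_univ, true_and] at hx
          obtain ⟨ha, hpos⟩ := hx
          exact le_rpow_neg_mul_of_le_logb_div hpos
            ((hQ x).lt_of_ne' (habs x hpos.ne')) ha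
      _ ≤ ∑ x, 2 ^ (-a) * P x :=
          sum_le_univ_sum_of_nonneg fun x => mul_nonneg (by positivity) (hP.1 x)
      _ = 2 ^ (-a) := by rw [← mul_sum, hP.2, mul_one]
  exact (le_negLog2_of_le_rpow_neg (sum_nonneg fun x _ => hQ x) hQS).trans
    (negLog2_sum_le_D0smooth S (hPS ▸ hA))

end D0smooth

/-- Chernoff-type bound: with `A = {x : log₂(P x / Q x) ≥ a}` and
`δ ≥ P({x : log₂(P x / Q x) < a})`, we have `D₀^δ(P‖Q) ≥ a + log₂ P(A)`;
in particular `D₀^δ(P‖Q) ≥ a + log₂(1-δ)`. -/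
theorem D0smooth_chernoff {Ω : Type*} [Fintype Ω]
    (P Q : Ω → ℝ) (hP : IsPmf P) (hQ : IsPmf Q)
    (habs : ∀ x, P x ≠ 0 → Q x ≠ 0)
    (a δ : ℝ)
    (hδ : ∑ x ∈ Finset.univ.filter (fun x => Real.logb 2 (P x / Q x) < a), P x ≤ δ) :
    (a : EReal) + log2E (∑ x ∈ Finset.univ.filter
        (fun x => a ≤ Real.logb 2 (P x / Q x)), P x) ≤ D0smooth P Q δ ∧
    ((a + Real.logb 2 (1 - δ) : ℝ) : EReal) ≤ D0smooth P Q δ := by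
  have hδ₀ : 0 ≤ δ := (sum_nonneg fun x _ => hP.1 x).trans hδ
  rcases le_or_gt 1 δ with hδ₁ | hδ₁
  · simp [D0smooth_eq_top_of_one_le hδ₁]
  have hA := one_sub_le_sum_filter_of_sum_filter_lt_le hP.2 _ a hδ
  have ha : (a : EReal) ≤ D0smooth P Q δ := le_D0smooth hP hQ.1 habs a hA
  have hA₁ : ∑ x ∈ univ.filter (fun x => a ≤ Real.logb 2 (P x / Q x)), P x ≤ 1 :=
    hP.2 ▸ sum_le_univ_sum_of_nonneg hP.1
  constructor
  · calc (a : EReal) + log2E _ ≤ a + 0 :=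
          add_le_add_right (log2E_nonpos (by linarith) hA₁) _
      _ ≤ D0smooth P Q δ := by rwa [add_zero]
  · refine le_trans (EReal.coe_le_coe_iff.mpr ?_) ha
    linarith [Real.logb_nonpos one_lt_two (by linarith : (0 : ℝ) ≤ 1 - δ) (by linarith)]
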